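/- arXiv:1203.6114 — 2 statements merged into one kernel-verified Lean document; each statement's English description precedes it below -/
import Mathlib

section
/- If u is a pointwise stable solution of the system Δu = ∇H(u) on ℝ^N, then u is a stable solution, i.e. for all ζ_1,…,ζ_m ∈ C¹_c(ℝ^N): Σ_i ∫ |∇ζ_i|² dx + Σ_{i,j} ∫ H_{u_iu_j}(u) ζ_i ζ_j dx ≥ 0. -/
open MeasureTheory Metric Filter Finset

noncomputable section

/-- Partial derivative of `f` at `x` in the `k`-th coordinate direction of `ℝ^N`. -/
def pd {N : ℕ} (f : EuclideanSpace ℝ (Fin N) → ℝ) (k : Fin N)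
    (x : EuclideanSpace ℝ (Fin N)) : ℝ :=
  fderiv ℝ f x (EuclideanSpace.single k 1)

/-- Laplacian of `f` at `x`: the sum of the pure second partial derivatives. -/
def lap {N : ℕ} (f : EuclideanSpace ℝ (Fin N) → ℝ) (x : EuclideanSpace ℝ (Fin N)) : ℝ :=
  ∑ k, pd (pd f k) k x

/-- `H_{u_i}`, the `i`-th partial derivative of `H : ℝ^m → ℝ`. -/
def Hp {m : ℕ} (H : EuclideanSpace ℝ (Fin m) → ℝ) (i : Fin m)
    (p : EuclideanSpace ℝ (Fin m)) : ℝ :=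
  fderiv ℝ H p (EuclideanSpace.single i 1)

/-- `H_{u_i u_j}`, the second mixed partial derivative of `H : ℝ^m → ℝ`. -/
def Hpp {m : ℕ} (H : EuclideanSpace ℝ (Fin m) → ℝ) (i j : Fin m)
    (p : EuclideanSpace ℝ (Fin m)) : ℝ :=
  fderiv ℝ (Hp H i) p (EuclideanSpace.single j 1)

/-- `u` solves the system `Δ u = ∇H(u)` on `Ω`. -/
def IsSolution {N m : ℕ} (H : EuclideanSpace ℝ (Fin m) → ℝ)
    (u : EuclideanSpace ℝ (Fin N) → EuclideanSpace ℝ (Fin m))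
    (Ω : Set (EuclideanSpace ℝ (Fin N))) : Prop :=
  ∀ i : Fin m, ∀ x ∈ Ω, lap (fun y => u y i) x = Hp H i (u x)

/-- `u` is a stable solution of `Δ u = ∇H(u)` on `Ω`: the second variation of the
energy is nonnegative on test functions `ζ_1, …, ζ_m ∈ C¹_c(Ω)`. -/
def Stable {N m : ℕ} (H : EuclideanSpace ℝ (Fin m) → ℝ)
    (u : EuclideanSpace ℝ (Fin N) → EuclideanSpace ℝ (Fin m))
    (Ω : Set (EuclideanSpace ℝ (Fin N))) : Prop :=
  ∀ ζ : Fin m → EuclideanSpace ℝ (Fin N) → ℝ,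
    (∀ i, ContDiff ℝ 1 (ζ i)) → (∀ i, HasCompactSupport (ζ i)) →
    (∀ i, tsupport (ζ i) ⊆ Ω) →
    0 ≤ (∑ i, ∫ x in Ω, ‖gradient (ζ i) x‖ ^ 2) +
        ∑ i, ∑ j, ∫ x in Ω, Hpp H i j (u x) * ζ i x * ζ j x

/-- `u` is a pointwise stable solution of `Δ u = ∇H(u)` on `Ω`: there are `λ ≥ 0`
and nowhere-vanishing `C²` functions `φ_i` with `Δ φ_i = Σ_j H_{u_i u_j}(u) φ_j - λ φ_i`
and `H_{u_i u_j}(u) φ_i φ_j ≤ 0` for `i < j`. -/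
def PointwiseStable {N m : ℕ} (H : EuclideanSpace ℝ (Fin m) → ℝ)
    (u : EuclideanSpace ℝ (Fin N) → EuclideanSpace ℝ (Fin m))
    (Ω : Set (EuclideanSpace ℝ (Fin N))) : Prop :=
  ∃ (lam : ℝ) (φ : Fin m → EuclideanSpace ℝ (Fin N) → ℝ),
    0 ≤ lam ∧ (∀ i, ContDiff ℝ 2 (φ i)) ∧ (∀ i, ∀ x ∈ Ω, φ i x ≠ 0) ∧
    (∀ i, ∀ x ∈ Ω, lap (φ i) x = (∑ j, Hpp H i j (u x) * φ j x) - lam * φ i x) ∧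
    (∀ i j : Fin m, i < j → ∀ x ∈ Ω, Hpp H i j (u x) * φ i x * φ j x ≤ 0)

/-- The system `Δ u = ∇H(u)` is orientable along `u`: there exist nonzero `C¹`
functions `θ_i`, none of which changes sign, with `H_{u_i u_j}(u) θ_i θ_j ≤ 0` for `i < j`. -/
def OrientableAlong {N m : ℕ} (H : EuclideanSpace ℝ (Fin m) → ℝ)
    (u : EuclideanSpace ℝ (Fin N) → EuclideanSpace ℝ (Fin m)) : Prop :=
  ∃ θ : Fin m → EuclideanSpace ℝ (Fin N) → ℝ,
    (∀ i, ContDiff ℝ 1 (θ i)) ∧ (∀ i, ∃ x, θ i x ≠ 0) ∧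
    (∀ i, (∀ x, 0 ≤ θ i x) ∨ (∀ x, θ i x ≤ 0)) ∧
    (∀ i j : Fin m, i < j → ∀ x, Hpp H i j (u x) * θ i x * θ j x ≤ 0)

/-- A function `w : ℝ^N → ℝ` is one-dimensional. -/
def OneDim {N : ℕ} (w : EuclideanSpace ℝ (Fin N) → ℝ) : Prop :=
  ∃ (a : EuclideanSpace ℝ (Fin N)) (g : ℝ → ℝ), ∀ x, w x = g (inner ℝ a x)

/-- `u` is an `H`-monotone solution with respect to the coordinate direction `ν`. -/
def HMonotone {N m : ℕ} (H : EuclideanSpace ℝ (Fin m) → ℝ)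
    (u : EuclideanSpace ℝ (Fin N) → EuclideanSpace ℝ (Fin m)) (ν : Fin N) : Prop :=
  (∀ (i : Fin m) (x : EuclideanSpace ℝ (Fin N)), pd (fun y => u y i) ν x ≠ 0) ∧
  (∀ i j : Fin m, i < j → ∀ x,
    Hpp H i j (u x) * (pd (fun y => u y i) ν x * pd (fun y => u y j) ν x) ≤ 0)

/-- The point `(x', t) ∈ ℝ^{n+1}` built from `x' ∈ ℝ^n` and a last coordinate `t`. -/
def snocPt {n : ℕ} (x' : EuclideanSpace ℝ (Fin n)) (t : ℝ) :
    EuclideanSpace ℝ (Fin (n + 1)) := WithLp.toLp 2 (Fin.snoc (WithLp.ofLp x') t : Fin (n + 1) → ℝ)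

/-!
Write each test function as `ζ_i = φ_i ψ_i`. Then
`|∇ζ_i|² = φ_i² |∇ψ_i|² + ∇φ_i · ∇(φ_i ψ_i²)`, and integrating the last term by parts and
inserting the linearized equation `Δφ_i = Σ_j H_{u_iu_j}(u) φ_j - λ φ_i` turns the second
variation into
`Σ_i ∫ φ_i² |∇ψ_i|² + λ Σ_i ∫ ζ_i² - ½ Σ_{i,j} ∫ H_{u_iu_j}(u) φ_i φ_j (ψ_i - ψ_j)²`,
where every term is nonnegative because `H_{u_iu_j}(u) φ_i φ_j ≤ 0` off the diagonal.
-/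

section PartialDerivatives

variable {N : ℕ} {f g : EuclideanSpace ℝ (Fin N) → ℝ}

lemma contDiff_pd {n : WithTop ℕ∞} (hf : ContDiff ℝ (n + 1) f) (k : Fin N) :
    ContDiff ℝ n (pd f k) := by
  have h := (ContinuousLinearMap.apply ℝ ℝ (EuclideanSpace.single k 1)).contDiff.comp
    (hf.fderiv_right le_rfl)
  exact h

lemma continuous_pd (hf : ContDiff ℝ 1 f) (k : Fin N) : Continuous (pd f k) :=
  (contDiff_pd (n := 0) (by simpa using hf) k).continuous

lemma continuous_lap (hf : ContDiff ℝ 2 f) : Continuous (lap f) := by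
  unfold lap
  exact continuous_finsetSum _ fun k _ => continuous_pd (contDiff_pd hf k) k

lemma HasCompactSupport.pd (hf : HasCompactSupport f) (k : Fin N) :
    HasCompactSupport (pd f k) := by
  have h := (hf.fderiv ℝ).comp_left (g := fun L => L (EuclideanSpace.single k 1)) rfl
  exact h

lemma pd_mul {x : EuclideanSpace ℝ (Fin N)} (hf : DifferentiableAt ℝ f x)
    (hg : DifferentiableAt ℝ g x) (k : Fin N) :
    pd (fun y => f y * g y) k x = pd f k x * g x + f x * pd g k x := by
  simp [pd, fderiv_fun_mul hf hg]
  ring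

lemma norm_gradient_sq_eq_sum_pd_sq {x : EuclideanSpace ℝ (Fin N)}
    (hf : DifferentiableAt ℝ f x) : ‖gradient f x‖ ^ 2 = ∑ k, pd f k x ^ 2 := by
  have hfd : HasFDerivAt f ((InnerProductSpace.toDual ℝ _) (gradient f x)) x :=
    hf.hasGradientAt
  have hcoord (k : Fin N) : pd f k x = gradient f x k := by
    rw [pd, hfd.fderiv, InnerProductSpace.toDual_apply_apply,
      EuclideanSpace.inner_single_right]
    simp
  rw [EuclideanSpace.norm_eq, Real.sq_sqrt (by positivity)]
  simp [hcoord]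

lemma integral_mul_pd_eq_neg (hf : ContDiff ℝ 1 f) (hg : ContDiff ℝ 1 g)
    (hgc : HasCompactSupport g) (k : Fin N) :
    ∫ x, f x * pd g k x = -∫ x, pd f k x * g x :=
  integral_mul_fderiv_eq_neg_fderiv_mul_of_integrable
    (((continuous_pd hf k).mul hg.continuous).integrable_of_hasCompactSupport hgc.mul_left)
    ((hf.continuous.mul (continuous_pd hg k)).integrable_of_hasCompactSupport
      (hgc.pd k).mul_left)
    ((hf.continuous.mul hg.continuous).integrable_of_hasCompactSupport hgc.mul_left)
    (fun x _ => hf.differentiable one_ne_zero x) (fun x _ => hg.differentiable one_ne_zero x)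

lemma integral_sum_pd_mul_pd_eq_neg_integral_lap_mul (hf : ContDiff ℝ 2 f)
    (hg : ContDiff ℝ 1 g) (hgc : HasCompactSupport g) :
    ∫ x, ∑ k, pd f k x * pd g k x = -∫ x, lap f x * g x := by
  have hf1 : ContDiff ℝ 1 f := hf.of_le one_le_two
  have hfirst (k : Fin N) : Integrable fun x => pd f k x * pd g k x :=
    ((continuous_pd hf1 k).mul (continuous_pd hg k)).integrable_of_hasCompactSupport
      (hgc.pd k).mul_left
  have hsecond (k : Fin N) : Integrable fun x => pd (pd f k) k x * g x :=
    ((continuous_pd (contDiff_pd hf k) k).mul hg.continuous).integrable_of_hasCompactSupport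
      hgc.mul_left
  simp only [lap, Finset.sum_mul, integral_finsetSum _ fun k _ => hfirst k,
    integral_finsetSum _ fun k _ => hsecond k, integral_mul_pd_eq_neg (contDiff_pd hf _) hg hgc,
    Finset.sum_neg_distrib]

lemma integral_norm_gradient_mul_sq (hf : ContDiff ℝ 2 f) (hg : ContDiff ℝ 1 g)
    (hgc : HasCompactSupport g) :
    ∫ x, ‖gradient (fun y => f y * g y) x‖ ^ 2
      = (∫ x, ∑ k, (f x * pd g k x) ^ 2) - ∫ x, lap f x * (f x * g x ^ 2) := by
  have hf1 : ContDiff ℝ 1 f := hf.of_le one_le_two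
  have hfg2 : ContDiff ℝ 1 (fun y => f y * (g y * g y)) := hf1.mul (hg.mul hg)
  have hfg2c : HasCompactSupport (fun y => f y * (g y * g y)) := hgc.mul_left.mul_left
  have hpoint (x : EuclideanSpace ℝ (Fin N)) : ‖gradient (fun y => f y * g y) x‖ ^ 2
      = ∑ k, (f x * pd g k x) ^ 2 + ∑ k, pd f k x * pd (fun y => f y * (g y * g y)) k x := by
    have hfx := hf1.differentiable one_ne_zero x
    have hgx := hg.differentiable one_ne_zero x
    rw [norm_gradient_sq_eq_sum_pd_sq (hfx.fun_mul hgx), ← Finset.sum_add_distrib]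
    refine Finset.sum_congr rfl fun k _ => ?_
    rw [pd_mul hfx hgx, pd_mul hfx (hgx.fun_mul hgx), pd_mul hgx hgx]
    ring
  have hsq_int : Integrable fun x => ∑ k, (f x * pd g k x) ^ 2 :=
    integrable_finsetSum _ fun k _ => ((hf1.continuous.mul (continuous_pd hg k)).pow 2)
      |>.integrable_of_hasCompactSupport ((hgc.pd k).mono fun x hx h0 => hx (by simp [h0]))
  have hcross_int : Integrable fun x => ∑ k, pd f k x * pd (fun y => f y * (g y * g y)) k x :=
    integrable_finsetSum _ fun k _ => ((continuous_pd hf1 k).mul (continuous_pd hfg2 k))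
      |>.integrable_of_hasCompactSupport (hfg2c.pd k).mul_left
  simp only [hpoint]
  rw [integral_add hsq_int hcross_int,
    integral_sum_pd_mul_pd_eq_neg_integral_lap_mul hf hfg2 hfg2c, sub_eq_add_neg]
  simp only [sq]

end PartialDerivatives

lemma Hpp_comm {m : ℕ} {H : EuclideanSpace ℝ (Fin m) → ℝ} (hH : ContDiff ℝ 2 H)
    (i j : Fin m) (p : EuclideanSpace ℝ (Fin m)) : Hpp H i j p = Hpp H j i p := by
  have hsymm : IsSymmSndFDerivAt ℝ H p :=
    hH.contDiffAt.isSymmSndFDerivAt (by simp [minSmoothness_of_isRCLikeNormedField])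
  have hdiff : DifferentiableAt ℝ (fderiv ℝ H) p :=
    (hH.fderiv_right (m := 1) le_rfl).differentiable one_ne_zero p
  have hsnd (a b : Fin m) : Hpp H a b p =
      fderiv ℝ (fderiv ℝ H) p (EuclideanSpace.single b 1) (EuclideanSpace.single a 1) := by
    unfold Hpp Hp
    rw [(hdiff.hasFDerivAt.clm_apply
      (hasFDerivAt_const (EuclideanSpace.single a 1) p)).fderiv]
    simp
  rw [hsnd, hsnd, hsymm.eq]

lemma sum_sum_mul_mul_sub_sq_nonneg {ι : Type*} [Fintype ι] [LinearOrder ι] (a : ι → ι → ℝ)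
    (hsymm : ∀ i j, a i j = a j i) (hoff : ∀ i j, i < j → a i j ≤ 0) (s : ι → ℝ) :
    0 ≤ ∑ i, ∑ j, a i j * (s i * s j - s i ^ 2) := by
  have hswap : ∑ i, ∑ j, a i j * s j ^ 2 = ∑ i, ∑ j, a i j * s i ^ 2 := by
    rw [Finset.sum_comm]
    simp only [hsymm]
  have hhalf : ∑ i, ∑ j, a i j * (s i * s j - s i ^ 2)
      = -(∑ i, ∑ j, a i j * (s i - s j) ^ 2) / 2 := by
    have hexpand (i j : ι) : a i j * (s i - s j) ^ 2 = a i j * s i ^ 2 + a i j * s j ^ 2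
        - 2 * (a i j * (s i * s j - s i ^ 2)) - 2 * (a i j * s i ^ 2) := by
      ring
    simp only [hexpand, Finset.sum_sub_distrib, Finset.sum_add_distrib, ← Finset.mul_sum, hswap]
    ring
  have hterm (i j : ι) : a i j * (s i - s j) ^ 2 ≤ 0 := by
    rcases lt_trichotomy i j with h | rfl | h
    · exact mul_nonpos_of_nonpos_of_nonneg (hoff i j h) (sq_nonneg _)
    · simp
    · exact mul_nonpos_of_nonpos_of_nonneg (hsymm i j ▸ hoff j i h) (sq_nonneg _)
  have hsum : ∑ i, ∑ j, a i j * (s i - s j) ^ 2 ≤ 0 :=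
    Finset.sum_nonpos fun i _ => Finset.sum_nonpos fun j _ => hterm i j
  linarith

lemma second_variation_integrand_nonneg {ι : Type*} [Fintype ι] [LinearOrder ι]
    (h : ι → ι → ℝ) (hsymm : ∀ i j, h i j = h j i) {lam : ℝ} (hlam : 0 ≤ lam) (φ ψ : ι → ℝ)
    (hoff : ∀ i j, i < j → h i j * φ i * φ j ≤ 0) :
    0 ≤ ∑ i, (∑ j, h i j * (φ i * ψ i) * (φ j * ψ j)
      - (∑ j, h i j * φ j - lam * φ i) * (φ i * ψ i ^ 2)) := by
  have hterm (i : ι) : ∑ j, h i j * (φ i * ψ i) * (φ j * ψ j)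
      - (∑ j, h i j * φ j - lam * φ i) * (φ i * ψ i ^ 2)
      = lam * (φ i * ψ i) ^ 2 + ∑ j, h i j * φ i * φ j * (ψ i * ψ j - ψ i ^ 2) := by
    have hexpand : ∑ j, h i j * φ i * φ j * (ψ i * ψ j - ψ i ^ 2)
        = ∑ j, h i j * (φ i * ψ i) * (φ j * ψ j) - ∑ j, h i j * φ j * (φ i * ψ i ^ 2) := by
      rw [← Finset.sum_sub_distrib]
      exact Finset.sum_congr rfl fun j _ => by ring
    rw [hexpand, sub_mul, Finset.sum_mul]
    ring
  rw [Finset.sum_congr rfl fun i _ => hterm i, Finset.sum_add_distrib, ← Finset.mul_sum]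
  exact add_nonneg (mul_nonneg hlam (Finset.sum_nonneg fun i _ => sq_nonneg _))
    (sum_sum_mul_mul_sub_sq_nonneg (fun i j => h i j * φ i * φ j)
      (fun i j => by rw [hsymm]; ring) hoff ψ)

lemma second_variation_mul_nonneg {N m : ℕ} {H : EuclideanSpace ℝ (Fin m) → ℝ}
    (hH : ContDiff ℝ 2 H) {u : EuclideanSpace ℝ (Fin N) → EuclideanSpace ℝ (Fin m)}
    (hu : Continuous u) {lam : ℝ} (hlam : 0 ≤ lam)
    {φ ψ : Fin m → EuclideanSpace ℝ (Fin N) → ℝ} (hφ : ∀ i, ContDiff ℝ 2 (φ i))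
    (hφeq : ∀ i x, lap (φ i) x = ∑ j, Hpp H i j (u x) * φ j x - lam * φ i x)
    (hsign : ∀ i j, i < j → ∀ x, Hpp H i j (u x) * φ i x * φ j x ≤ 0)
    (hψ : ∀ i, ContDiff ℝ 1 (ψ i)) (hψc : ∀ i, HasCompactSupport (ψ i)) :
    0 ≤ (∑ i, ∫ x, ‖gradient (fun y => φ i y * ψ i y) x‖ ^ 2) +
        ∑ i, ∑ j, ∫ x, Hpp H i j (u x) * (φ i x * ψ i x) * (φ j x * ψ j x) := by
  have hφψ (i : Fin m) : Continuous fun x => φ i x * ψ i x :=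
    (hφ i).continuous.mul (hψ i).continuous
  have hcoupling_int (i j : Fin m) :
      Integrable fun x => Hpp H i j (u x) * (φ i x * ψ i x) * (φ j x * ψ j x) :=
    (((continuous_pd (contDiff_pd hH i) j).comp hu).mul (hφψ i) |>.mul (hφψ j))
      |>.integrable_of_hasCompactSupport (hψc j).mul_left.mul_left
  have hlap_int (i : Fin m) : Integrable fun x => lap (φ i) x * (φ i x * ψ i x ^ 2) :=
    ((continuous_lap (hφ i)).mul ((hφ i).continuous.mul ((hψ i).continuous.pow 2)))
      |>.integrable_of_hasCompactSupport ((hψc i).mono fun x hx h0 => hx (by simp [h0]))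
  have hcoupling_sum_int (i : Fin m) :
      Integrable fun x => ∑ j, Hpp H i j (u x) * (φ i x * ψ i x) * (φ j x * ψ j x) :=
    integrable_finsetSum _ fun j _ => hcoupling_int i j
  have hremainder_int (i : Fin m) : Integrable fun x =>
      ∑ j, Hpp H i j (u x) * (φ i x * ψ i x) * (φ j x * ψ j x)
        - lap (φ i) x * (φ i x * ψ i x ^ 2) :=
    (hcoupling_sum_int i).sub (hlap_int i)
  have hsplit (i : Fin m) : (∫ x, ‖gradient (fun y => φ i y * ψ i y) x‖ ^ 2)
        + ∑ j, ∫ x, Hpp H i j (u x) * (φ i x * ψ i x) * (φ j x * ψ j x)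
      = (∫ x, ∑ k, (φ i x * pd (ψ i) k x) ^ 2)
        + ∫ x, (∑ j, Hpp H i j (u x) * (φ i x * ψ i x) * (φ j x * ψ j x)
          - lap (φ i) x * (φ i x * ψ i x ^ 2)) := by
    rw [integral_norm_gradient_mul_sq (hφ i) (hψ i) (hψc i),
      ← integral_finsetSum _ fun j _ => hcoupling_int i j,
      integral_sub (hcoupling_sum_int i) (hlap_int i)]
    ring
  rw [← Finset.sum_add_distrib, Finset.sum_congr rfl fun i _ => hsplit i, Finset.sum_add_distrib,
    ← integral_finsetSum _ fun i _ => hremainder_int i]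
  refine add_nonneg (Finset.sum_nonneg fun i _ => integral_nonneg fun x =>
    Finset.sum_nonneg fun k _ => sq_nonneg _) (integral_nonneg fun x => ?_)
  simp only [hφeq]
  exact second_variation_integrand_nonneg (fun i j => Hpp H i j (u x))
    (fun i j => Hpp_comm hH i j (u x)) hlam (φ · x) (ψ · x) (fun i j hij => hsign i j hij x)

theorem stmt_4_general (N m : ℕ)
    (H : EuclideanSpace ℝ (Fin m) → ℝ) (hH : ContDiff ℝ 2 H)
    (u : EuclideanSpace ℝ (Fin N) → EuclideanSpace ℝ (Fin m)) (hu : ContDiff ℝ 2 u)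
    (hps : PointwiseStable H u Set.univ) :
    Stable H u Set.univ := by
  intro ζ hζ hζc _
  obtain ⟨lam, φ, hlam, hφ, hφ0, hφeq, hsign⟩ := hps
  have hφ0' (i : Fin m) (x : EuclideanSpace ℝ (Fin N)) : φ i x ≠ 0 := hφ0 i x trivial
  have hζ_eq : ζ = fun i x => φ i x * (ζ i / φ i) x :=
    funext fun i => funext fun x => (mul_div_cancel₀ _ (hφ0' i x)).symm
  rw [Measure.restrict_univ, hζ_eq]
  exact second_variation_mul_nonneg hH hu.continuous hlam hφ (fun i x => hφeq i x trivial)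
    (fun i j hij x => hsign i j hij x trivial)
    (fun i => (hζ i).div ((hφ i).of_le one_le_two) (hφ0' i))
    (fun i => div_eq_mul_inv (ζ i) (φ i) ▸ (hζc i).mul_right)

/-- a pointwise stable solution of `Δu = ∇H(u)` on `ℝ^N` is stable. -/
theorem stmt_4 (N m : ℕ)
    (H : EuclideanSpace ℝ (Fin m) → ℝ) (hH : ContDiff ℝ 2 H)
    (u : EuclideanSpace ℝ (Fin N) → EuclideanSpace ℝ (Fin m)) (hu : ContDiff ℝ 2 u)
    (hsol : IsSolution H u Set.univ)
    (hps : PointwiseStable H u Set.univ) :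
    Stable H u Set.univ :=
  stmt_4_general N m H hH u hu hps
end
end

section
/- Let m ≥ 1, let (a_{ij})_{1≤i,j≤m} be real numbers with a_{ij} = a_{ji} for all i, j, let φ_1,…,φ_m be nonzero real numbers with a_{ij} φ_i φ_j ≤ 0 for all i ≠ j, and let ζ_1,…,ζ_m ∈ ℝ. Then Σ_{i,j=1}^m a_{ij} (φ_j/φ_i) ζ_i² ≤ Σ_{i,j=1}^m a_{ij} ζ_i ζ_j. -/
open Finset

/-!
Write the difference of the two sides as `∑ i, ∑ j, d i j`. Symmetrising, `d i j + d j i` is the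
Picone-type expression `-(a i j φ i φ j) (ζ i / φ i - ζ j / φ j)²`, which is nonnegative by the
sign condition for `i ≠ j` and vanishes for `i = j`.
-/

section

variable {ι 𝕜 : Type*} [Field 𝕜]

theorem mul_sub_div_mul_sq_add_swap (a φ ψ x y : 𝕜) (hφ : φ ≠ 0) (hψ : ψ ≠ 0) :
    (a * x * y - a * (ψ / φ) * x ^ 2) + (a * y * x - a * (φ / ψ) * y ^ 2)
      = -(a * φ * ψ) * (x / φ - y / ψ) ^ 2 := by
  field_simp
  ring

variable [LinearOrder 𝕜] [IsStrictOrderedRing 𝕜]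

theorem Finset.sum_sum_nonneg_of_add_swap_nonneg (s : Finset ι) (f : ι → ι → 𝕜)
    (hf : ∀ i ∈ s, ∀ j ∈ s, 0 ≤ f i j + f j i) :
    0 ≤ ∑ i ∈ s, ∑ j ∈ s, f i j := by
  have hswap : ∑ i ∈ s, ∑ j ∈ s, (f i j + f j i) = 2 * ∑ i ∈ s, ∑ j ∈ s, f i j := by
    simp only [sum_add_distrib, two_mul, add_right_inj]
    exact sum_comm
  have hnonneg : 0 ≤ ∑ i ∈ s, ∑ j ∈ s, (f i j + f j i) :=
    sum_nonneg fun i hi => sum_nonneg fun j hj => hf i hi j hj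
  linarith

theorem sum_sum_mul_div_mul_sq_le [Fintype ι] (a : ι → ι → 𝕜) (hsymm : ∀ i j, a i j = a j i)
    (φ : ι → 𝕜) (hφ : ∀ i, φ i ≠ 0) (hsign : ∀ i j, i ≠ j → a i j * φ i * φ j ≤ 0)
    (ζ : ι → 𝕜) :
    ∑ i, ∑ j, a i j * (φ j / φ i) * ζ i ^ 2 ≤ ∑ i, ∑ j, a i j * ζ i * ζ j := by
  have hpair : ∀ i j, 0 ≤ (a i j * ζ i * ζ j - a i j * (φ j / φ i) * ζ i ^ 2)
      + (a j i * ζ j * ζ i - a j i * (φ i / φ j) * ζ j ^ 2) := by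
    intro i j
    rw [← hsymm i j, mul_sub_div_mul_sq_add_swap _ _ _ _ _ (hφ i) (hφ j)]
    rcases eq_or_ne i j with rfl | hij
    · simp
    · exact mul_nonneg (neg_nonneg.2 (hsign i j hij)) (sq_nonneg _)
  have hdiff := sum_sum_nonneg_of_add_swap_nonneg univ _ fun i _ j _ => hpair i j
  simp only [sum_sub_distrib] at hdiff
  linarith

end

theorem stmt_19_general (m : ℕ) (a : Fin m → Fin m → ℝ)
    (hsymm : ∀ i j, a i j = a j i)
    (φ : Fin m → ℝ) (hφ : ∀ i, φ i ≠ 0)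
    (hsign : ∀ i j, i ≠ j → a i j * φ i * φ j ≤ 0)
    (ζ : Fin m → ℝ) :
    (∑ i, ∑ j, a i j * (φ j / φ i) * ζ i ^ 2) ≤ ∑ i, ∑ j, a i j * ζ i * ζ j :=
  sum_sum_mul_div_mul_sq_le a hsymm φ hφ hsign ζ

/-- the pointwise algebraic inequality used to show that pointwise
stable solutions are stable: for symmetric `a_{ij}`, nonzero `φ_i` with
`a_{ij} φ_i φ_j ≤ 0` for `i ≠ j`, and any `ζ_i`,
`Σ_{i,j} a_{ij} (φ_j/φ_i) ζ_i² ≤ Σ_{i,j} a_{ij} ζ_i ζ_j`. -/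
theorem stmt_19 (m : ℕ) (hm : 1 ≤ m) (a : Fin m → Fin m → ℝ)
    (hsymm : ∀ i j, a i j = a j i)
    (φ : Fin m → ℝ) (hφ : ∀ i, φ i ≠ 0)
    (hsign : ∀ i j, i ≠ j → a i j * φ i * φ j ≤ 0)
    (ζ : Fin m → ℝ) :
    (∑ i, ∑ j, a i j * (φ j / φ i) * ζ i ^ 2) ≤ ∑ i, ∑ j, a i j * ζ i * ζ j :=
  stmt_19_general m a hsymm φ hφ hsign ζ
end
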